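/- For every M < ∞, P(‖X₁(x)‖ ≤ M) → 0 as ‖x‖ → ∞; that is, for every M < ∞ and ε > 0 there exists R < ∞ such that ‖x‖ > R implies P(‖X₁(x)‖ ≤ M) ≤ ε. -/

import Mathlib

open MeasureTheory Finset

/-- The Euclidean norm on `ℝ^k` (realized as `Fin k → ℝ`). -/
noncomputable def euclNorm {k : ℕ} (x : Fin k → ℝ) : ℝ := Real.sqrt (∑ i, x i ^ 2)

/-!
Since `f(u) ≤ L₀ / (1 + |u|)`, the interval `{u : |A + B u| ≤ M}`, of length `2M / B` and at
distance about `(|A| - M) / B` from the origin, has mass at most `2 M L₀ / (max(|A|, B) - M)` under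
the law of `e`. Hence `P(‖X₁(x)‖ ≤ M) ≤ P(|a(x) + b(x) e| ≤ M)` is small once `max(|a(x)|, b(x))`
is large. By homogeneity `max(|a*(x)|, b*(x)) ≥ L₁ ‖x‖`, and the `o(‖x‖)` errors leave
`max(|a(x)|, b(x)) ≥ L₁ ‖x‖ / 2` for large `‖x‖`.
-/

lemma abs_apply_le_euclNorm {k : ℕ} (x : Fin k → ℝ) (i : Fin k) : |x i| ≤ euclNorm x := by
  rw [← Real.sqrt_sq_eq_abs]
  exact Real.sqrt_le_sqrt (single_le_sum (fun j _ => sq_nonneg (x j)) (mem_univ i))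

lemma euclNorm_smul {k : ℕ} {c : ℝ} (hc : 0 ≤ c) (x : Fin k → ℝ) :
    euclNorm (c • x) = c * euclNorm x := by
  simp only [euclNorm, Pi.smul_apply, smul_eq_mul, mul_pow]
  rw [← mul_sum, Real.sqrt_mul (by positivity), Real.sqrt_sq hc]

lemma mul_euclNorm_le_max_abs_of_homogeneous {k : ℕ} {g h : (Fin k → ℝ) → ℝ} {L : ℝ}
    (hg : ∀ c : ℝ, 0 < c → ∀ x, g (c • x) = c * g x)
    (hh : ∀ c : ℝ, 0 < c → ∀ x, h (c • x) = c * h x)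
    (hL : ∀ θ, euclNorm θ = 1 → L ≤ max |g θ| (h θ))
    {x : Fin k → ℝ} (hx : 0 < euclNorm x) :
    L * euclNorm x ≤ max |g x| (h x) := by
  have hinv : 0 < (euclNorm x)⁻¹ := inv_pos.mpr hx
  have hθ := hL ((euclNorm x)⁻¹ • x) (by rw [euclNorm_smul hinv.le, inv_mul_cancel₀ hx.ne'])
  rw [hg _ hinv, hh _ hinv, abs_mul, abs_of_pos hinv, ← mul_max_of_nonneg _ _ hinv.le] at hθ
  rw [mul_comm]
  exact (le_inv_mul_iff₀ hx).mp hθ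

lemma sub_le_max_abs_of_abs_sub_le {a a' b b' δ : ℝ} (ha : |a - a'| ≤ δ) (hb : |b - b'| ≤ δ) :
    max |a'| b' - δ ≤ max |a| b := by
  have ha' : |a'| ≤ |a| + δ := by
    linarith [abs_sub_abs_le_abs_sub a' a, abs_sub_comm a a']
  have hb' : b' ≤ b + δ := by linarith [(abs_le.mp hb).1]
  rw [sub_le_iff_le_add]
  exact max_le (ha'.trans (by gcongr; exact le_max_left _ _))
    (hb'.trans (by gcongr; exact le_max_right _ _))

lemma exists_le_max_abs_of_lt_euclNorm {k : ℕ} {a b astar bstar : (Fin k → ℝ) → ℝ}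
    (hah : ∀ c : ℝ, 0 < c → ∀ x, astar (c • x) = c * astar x)
    (hbh : ∀ c : ℝ, 0 < c → ∀ x, bstar (c • x) = c * bstar x)
    {L : ℝ} (hL : 0 < L) (hLstar : ∀ θ, euclNorm θ = 1 → L ≤ max |astar θ| (bstar θ))
    (hao : ∀ ε : ℝ, 0 < ε → ∃ M : ℝ, ∀ x, M < euclNorm x → |a x - astar x| ≤ ε * euclNorm x)
    (hbo : ∀ ε : ℝ, 0 < ε → ∃ M : ℝ, ∀ x, M < euclNorm x → |b x - bstar x| ≤ ε * euclNorm x)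
    (C : ℝ) : ∃ R : ℝ, ∀ x, R < euclNorm x → C ≤ max |a x| (b x) := by
  obtain ⟨Ra, hRa⟩ := hao (L / 2) (half_pos hL)
  obtain ⟨Rb, hRb⟩ := hbo (L / 2) (half_pos hL)
  refine ⟨max (max Ra Rb) (max (2 * C / L) 0), fun x hx => ?_⟩
  simp only [max_lt_iff] at hx
  obtain ⟨⟨hxa, hxb⟩, hxC, hx0⟩ := hx
  have hstar := mul_euclNorm_le_max_abs_of_homogeneous hah hbh hLstar hx0
  have hclose := sub_le_max_abs_of_abs_sub_le (hRa x hxa) (hRb x hxb)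
  have hC : C < L / 2 * euclNorm x := by
    rw [div_lt_iff₀ hL] at hxC
    linarith
  linarith

lemma setOf_abs_add_mul_le_eq_Icc {A B M : ℝ} (hB : 0 < B) :
    {u : ℝ | |A + B * u| ≤ M} = Set.Icc ((-M - A) / B) ((M - A) / B) := by
  ext u
  simp only [Set.mem_ofPred_eq, Set.mem_Icc, abs_le, div_le_iff₀ hB, le_div_iff₀ hB]
  constructor <;> rintro ⟨h₁, h₂⟩ <;> constructor <;> linarith

lemma withDensity_setOf_abs_add_mul_le {f : ℝ → ℝ} (hf0 : ∀ u, 0 ≤ f u) {L : ℝ}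
    (hL : ∀ u, (1 + |u|) * f u ≤ L) {A B M : ℝ} (hB : 0 < B) (hM : M < max |A| B) :
    volume.withDensity (fun u => ENNReal.ofReal (f u)) {u | |A + B * u| ≤ M}
      ≤ ENNReal.ofReal (2 * M * L / (max |A| B - M)) := by
  set Q := max |A| B - M
  have hQ : 0 < Q := sub_pos.mpr hM
  have hL0 : 0 ≤ L := (mul_nonneg (by positivity) (hf0 0)).trans (hL 0)
  have hdens : ∀ u ∈ {u | |A + B * u| ≤ M}, ENNReal.ofReal (f u) ≤ ENNReal.ofReal (L * B / Q) := by
    intro u (hu : |A + B * u| ≤ M)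
    have hA : |A| ≤ |A + B * u| + B * |u| := by
      calc |A| = |(A + B * u) - B * u| := by ring_nf
        _ ≤ |A + B * u| + |B * u| := abs_sub _ _
        _ = |A + B * u| + B * |u| := by rw [abs_mul, abs_of_pos hB]
    have hQu : Q ≤ B * (1 + |u|) := by
      rw [sub_le_iff_le_add]
      exact max_le (by linarith) (by nlinarith [abs_nonneg u, abs_nonneg (A + B * u)])
    refine ENNReal.ofReal_le_ofReal ((le_div_iff₀ hQ).mpr ?_)
    calc f u * Q ≤ f u * (B * (1 + |u|)) := mul_le_mul_of_nonneg_left hQu (hf0 u)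
      _ = B * ((1 + |u|) * f u) := by ring
      _ ≤ B * L := mul_le_mul_of_nonneg_left (hL u) hB.le
      _ = L * B := mul_comm _ _
  rw [withDensity_apply _ (by rw [setOf_abs_add_mul_le_eq_Icc hB]; exact measurableSet_Icc)]
  calc ∫⁻ u in {u | |A + B * u| ≤ M}, ENNReal.ofReal (f u)
      ≤ ∫⁻ _ in {u | |A + B * u| ≤ M}, ENNReal.ofReal (L * B / Q) :=
        setLIntegral_mono measurable_const hdens
    _ = ENNReal.ofReal (L * B / Q) * ENNReal.ofReal (2 * M / B) := by
        rw [setLIntegral_const, setOf_abs_add_mul_le_eq_Icc hB, Real.volume_Icc]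
        congr 2
        field_simp
        ring
    _ = ENNReal.ofReal (2 * M * L / Q) := by
        rw [← ENNReal.ofReal_mul (by positivity)]
        congr 1
        field_simp

lemma exists_withDensity_setOf_abs_add_mul_le {f : ℝ → ℝ} (hf0 : ∀ u, 0 ≤ f u) {L : ℝ}
    (hL : ∀ u, (1 + |u|) * f u ≤ L) (M : ℝ) {ε : ℝ} (hε : 0 < ε) :
    ∃ C : ℝ, ∀ A B : ℝ, 0 < B → C ≤ max |A| B →
      volume.withDensity (fun u => ENNReal.ofReal (f u)) {u | |A + B * u| ≤ M}
        ≤ ENNReal.ofReal ε := by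
  refine ⟨M + max (2 * M * L / ε) 1, fun A B hB hC => ?_⟩
  have hQ : max (2 * M * L / ε) 1 ≤ max |A| B - M := by linarith
  have hQ0 : 0 < max |A| B - M := lt_of_lt_of_le (by positivity) hQ
  refine (withDensity_setOf_abs_add_mul_le hf0 hL hB (sub_pos.mp hQ0)).trans
    (ENNReal.ofReal_le_ofReal ?_)
  rw [div_le_iff₀ hQ0, ← div_le_iff₀' hε]
  exact (le_max_left _ _).trans hQ

theorem stmt14_general {Ω : Type*} [MeasurableSpace Ω] (μ : Measure Ω)
    (n : ℕ) (e : Ω → ℝ) (he : Measurable e)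
    (f : ℝ → ℝ) (hf0 : ∀ u, 0 ≤ f u)
    (hlaw : μ.map e = volume.withDensity (fun u => ENNReal.ofReal (f u)))
    (L₀ : ℝ) (hL₀ : ∀ u, (1 + |u|) * f u ≤ L₀)
    (a b astar bstar : (Fin (n + 1) → ℝ) → ℝ)
    (hbpos : ∀ x, 0 < b x)
    (hah : ∀ c : ℝ, 0 < c → ∀ x, astar (c • x) = c * astar x)
    (hbh : ∀ c : ℝ, 0 < c → ∀ x, bstar (c • x) = c * bstar x)
    (hL₁ : ∃ L₁ : ℝ, 0 < L₁ ∧ ∀ x, euclNorm x = 1 → L₁ ≤ max |astar x| (bstar x))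
    (hao : ∀ ε : ℝ, 0 < ε → ∃ M : ℝ, ∀ x, M < euclNorm x → |a x - astar x| ≤ ε * euclNorm x)
    (hbo : ∀ ε : ℝ, 0 < ε → ∃ M : ℝ, ∀ x, M < euclNorm x → |b x - bstar x| ≤ ε * euclNorm x) :
    ∀ M : ℝ, ∀ ε : ℝ, 0 < ε →
      ∃ R : ℝ, ∀ x : Fin (n + 1) → ℝ, R < euclNorm x →
        μ {ω | euclNorm (Fin.cons (a x + b x * e ω)
            (fun j : Fin n => x j.castSucc) : Fin (n + 1) → ℝ) ≤ M}
          ≤ ENNReal.ofReal ε := by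
  intro M ε hε
  obtain ⟨L₁, hL₁pos, hL₁⟩ := hL₁
  obtain ⟨C, hC⟩ := exists_withDensity_setOf_abs_add_mul_le hf0 hL₀ M hε
  obtain ⟨R, hR⟩ := exists_le_max_abs_of_lt_euclNorm hah hbh hL₁pos hL₁ hao hbo C
  refine ⟨R, fun x hx => ?_⟩
  have hfirst : ∀ ω, |a x + b x * e ω| ≤ euclNorm (Fin.cons (a x + b x * e ω)
      (fun j : Fin n => x j.castSucc) : Fin (n + 1) → ℝ) :=
    fun ω => abs_apply_le_euclNorm (Fin.cons (a x + b x * e ω) _ : Fin (n + 1) → ℝ) 0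
  calc _ ≤ μ (e ⁻¹' {u | |a x + b x * u| ≤ M}) :=
        measure_mono fun ω hω => (hfirst ω).trans hω
    _ = volume.withDensity (fun u => ENNReal.ofReal (f u)) {u | |a x + b x * u| ≤ M} := by
        rw [← hlaw, Measure.map_apply he (measurableSet_le (by fun_prop) measurable_const)]
    _ ≤ ENNReal.ofReal ε := hC _ _ (hbpos x) (hR x hx)

/-- **Statement 13.** Let `a, b : ℝ^p → ℝ` (`p = n+1`) be Borel, `b > 0`, with
`max(|a(x)|,b(x)) = O(1+‖x‖)`, `inf_{‖x‖≤M} b(x)/(1+‖x‖) > 0` for all `M`, and suppose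
there are positively 1-homogeneous Borel `a*, b*` with `b* ≥ 0`,
`inf_{‖θ‖=1} max(|a*(θ)|,b*(θ)) > 0` and `a − a* = o(‖x‖)`, `b − b* = o(‖x‖)`.  Let `e`
have a density `f` with `sup_u (1+|u|)f(u) < ∞` and `E(|e|^{r₀}) < ∞`.  With
`X₁(x) = (a(x)+b(x)e, x₁,…,x_{p−1})`: for every `M < ∞` and `ε > 0` there exists
`R < ∞` such that `‖x‖ > R` implies `P(‖X₁(x)‖ ≤ M) ≤ ε`. -/
theorem stmt14 {Ω : Type*} [MeasurableSpace Ω] (μ : Measure Ω) [IsProbabilityMeasure μ]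
    (n : ℕ) (e : Ω → ℝ) (he : Measurable e)
    (f : ℝ → ℝ) (hf0 : ∀ u, 0 ≤ f u) (hfm : Measurable f)
    (hlaw : μ.map e = volume.withDensity (fun u => ENNReal.ofReal (f u)))
    (L₀ : ℝ) (hL₀ : ∀ u, (1 + |u|) * f u ≤ L₀)
    (r₀ : ℝ) (hr₀ : 0 < r₀) (hmom : Integrable (fun ω => |e ω| ^ r₀) μ)
    (a b astar bstar : (Fin (n + 1) → ℝ) → ℝ)
    (ham : Measurable a) (hbm : Measurable b)
    (hasm : Measurable astar) (hbsm : Measurable bstar)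
    (hbpos : ∀ x, 0 < b x)
    (hgrow : ∃ K : ℝ, ∀ x, max |a x| (b x) ≤ K * (1 + euclNorm x))
    (hbinf : ∀ M : ℝ, ∃ c : ℝ, 0 < c ∧ ∀ x, euclNorm x ≤ M → c * (1 + euclNorm x) ≤ b x)
    (hah : ∀ c : ℝ, 0 < c → ∀ x, astar (c • x) = c * astar x)
    (hbh : ∀ c : ℝ, 0 < c → ∀ x, bstar (c • x) = c * bstar x)
    (hbs0 : ∀ x, 0 ≤ bstar x)
    (hL₁ : ∃ L₁ : ℝ, 0 < L₁ ∧ ∀ x, euclNorm x = 1 → L₁ ≤ max |astar x| (bstar x))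
    (hao : ∀ ε : ℝ, 0 < ε → ∃ M : ℝ, ∀ x, M < euclNorm x → |a x - astar x| ≤ ε * euclNorm x)
    (hbo : ∀ ε : ℝ, 0 < ε → ∃ M : ℝ, ∀ x, M < euclNorm x → |b x - bstar x| ≤ ε * euclNorm x) :
    ∀ M : ℝ, ∀ ε : ℝ, 0 < ε →
      ∃ R : ℝ, ∀ x : Fin (n + 1) → ℝ, R < euclNorm x →
        μ {ω | euclNorm (Fin.cons (a x + b x * e ω)
            (fun j : Fin n => x j.castSucc) : Fin (n + 1) → ℝ) ≤ M}
          ≤ ENNReal.ofReal ε :=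
  stmt14_general μ n e he f hf0 hlaw L₀ hL₀ a b astar bstar hbpos hah hbh hL₁ hao hbo
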